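/- Let ‖·‖_X and ‖·‖_Z be rearrangement-invariant function norms over (0,∞), let w be a nonnegative measurable function on (0,∞), and define ‖g‖_Y := ‖g^*(t) w(t)‖_Z for measurable g on (0,∞). Then for every a > 0: sup_{‖f‖_X ≤ 1} ‖f^* χ_{(a,∞)}‖_Y ≤ ‖χ_{(0,a)} w‖_Z / φ_X(a) + sup_{‖f‖_X ≤ 1} ‖f^*(t) w(t) χ_{(a,∞)}(t)‖_Z, where the suprema are over measurable f on (0,∞) with ‖f‖_X ≤ 1. -/

import Mathlib

open MeasureTheory Set Filter Topology
open scoped ENNReal NNReal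

noncomputable section

/-- The nonincreasing rearrangement of an `ℝ≥0∞`-valued function with respect to `μ`:
`f^*(t) = inf {λ : μ({f > λ}) ≤ t}`. -/
def rearr {α : Type*} [MeasurableSpace α] (μ : Measure α) (f : α → ℝ≥0∞) (t : ℝ) : ℝ≥0∞ :=
  sInf {l : ℝ≥0∞ | μ {x | l < f x} ≤ ENNReal.ofReal t}

/-- A rearrangement-invariant function norm over the measure space `(α, μ)`, acting on
nonnegative (`ℝ≥0∞`-valued) measurable functions. -/
structure RINorm {α : Type*} [MeasurableSpace α] (μ : Measure α) where
  N : (α → ℝ≥0∞) → ℝ≥0∞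
  add_le : ∀ f g : α → ℝ≥0∞, Measurable f → Measurable g →
    N (fun x => f x + g x) ≤ N f + N g
  smul_eq : ∀ (c : ℝ≥0) (f : α → ℝ≥0∞), Measurable f →
    N (fun x => (c : ℝ≥0∞) * f x) = (c : ℝ≥0∞) * N f
  eq_zero_iff : ∀ f : α → ℝ≥0∞, Measurable f → (N f = 0 ↔ f =ᵐ[μ] 0)
  mono : ∀ f g : α → ℝ≥0∞, Measurable f → Measurable g →
    (∀ᵐ x ∂μ, f x ≤ g x) → N f ≤ N g
  fatou : ∀ (F : ℕ → α → ℝ≥0∞) (f : α → ℝ≥0∞), (∀ k, Measurable (F k)) → Measurable f →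
    (∀ᵐ x ∂μ, Monotone fun k => F k x) → (∀ᵐ x ∂μ, (⨆ k, F k x) = f x) →
    (⨆ k, N (F k)) = N f
  indicator_lt_top : ∀ E : Set α, MeasurableSet E → μ E < ∞ →
    N (E.indicator fun _ => 1) < ∞
  exists_integral_le : ∀ E : Set α, MeasurableSet E → μ E < ∞ → ∃ C : ℝ≥0∞, C < ∞ ∧
    ∀ f : α → ℝ≥0∞, Measurable f → (∫⁻ x in E, f x ∂μ) ≤ C * N f
  rearr_invariant : ∀ f g : α → ℝ≥0∞, Measurable f → Measurable g →
    (∀ l : ℝ≥0∞, μ {x | l < f x} = μ {x | l < g x}) → N f = N g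

/-- Lebesgue measure on `(0,∞)`. -/
def μI : Measure ℝ := volume.restrict (Set.Ioi (0 : ℝ))

/-- The fundamental function of an r.i. norm over `(0,∞)`: `φ_X(t) = ‖χ_(0,t)‖_X`. -/
def fund (X : RINorm μI) (t : ℝ) : ℝ≥0∞ := X.N ((Set.Ioo (0 : ℝ) t).indicator fun _ => 1)

/-!
Fix `f` with `‖f‖_X ≤ 1` and put `g = f^* χ_(a,∞)`. Since `g ≤ f^*(a)` and `g ≤ f^*`, we get
`g^* ≤ f^*(a)` and `g^* ≤ f^** ≤ f^*`; use the first bound on `(0,a)` and the second on `(a,∞)`.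
The triangle inequality in `Z` then leaves `f^*(a) ‖χ_(0,a) w‖_Z`, and `f^*(a) φ_X(a) ≤ ‖f‖_X ≤ 1`
because `f ≥ c χ_{f > c}` where `|{f > c}| > a` for every `c < f^*(a)`.
-/

section Rearrangement

variable {α : Type*} [MeasurableSpace α] {μ : Measure α}

lemma rearr_antitone (f : α → ℝ≥0∞) : Antitone (rearr μ f) := fun _ _ hst =>
  sInf_le_sInf fun _ hl => hl.trans (ENNReal.ofReal_le_ofReal hst)

lemma measurable_rearr (f : α → ℝ≥0∞) : Measurable (rearr μ f) :=
  (rearr_antitone f).measurable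

lemma rearr_mono {f g : α → ℝ≥0∞} (h : f ≤ g) : rearr μ f ≤ rearr μ g := fun _ =>
  sInf_le_sInf fun _ hl => (measure_mono fun x hx => lt_of_lt_of_le hx (h x)).trans hl

lemma rearr_le_of_forall_le {f : α → ℝ≥0∞} {c : ℝ≥0∞} (h : ∀ x, f x ≤ c) (t : ℝ) :
    rearr μ f t ≤ c :=
  sInf_le <| by simp [fun x => not_lt.mpr (h x)]

lemma lt_measure_setOf_lt_of_lt_rearr {f : α → ℝ≥0∞} {c : ℝ≥0∞} {t : ℝ}
    (h : c < rearr μ f t) : ENNReal.ofReal t < μ {x | c < f x} :=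
  not_le.mp fun hle => h.not_ge (sInf_le hle : rearr μ f t ≤ c)

end Rearrangement

lemma μI_Iio (t : ℝ) : μI (Iio t) = ENNReal.ofReal t := by
  rw [μI, Measure.restrict_apply measurableSet_Iio, Iio_inter_Ioi, Real.volume_Ioo, sub_zero]

lemma μI_Ioo (b : ℝ) : μI (Ioo 0 b) = ENNReal.ofReal b := by
  rw [μI, Measure.restrict_apply measurableSet_Ioo, inter_eq_left.mpr Ioo_subset_Ioi_self,
    Real.volume_Ioo, sub_zero]

lemma μI_Ioi_zero : μI (Ioi 0) = ∞ := by
  rw [μI, Measure.restrict_apply measurableSet_Ioi, inter_self, Real.volume_Ioi]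

lemma rearr_rearr_le (f : ℝ → ℝ≥0∞) (t : ℝ) : rearr μI (rearr μI f) t ≤ rearr μI f t := by
  refine sInf_le ((measure_mono fun x hx => ?_).trans (μI_Iio t).le)
  exact lt_of_not_ge fun hle => (rearr_antitone f hle).not_gt hx

namespace RINorm

variable {α : Type*} [MeasurableSpace α] {μ : Measure α}

lemma N_const_mul_le (X : RINorm μ) (c : ℝ≥0∞) {f : α → ℝ≥0∞} (hf : Measurable f) :
    X.N (fun x => c * f x) ≤ c * X.N f := by
  rcases eq_or_ne c ∞ with rfl | hc
  · rcases eq_or_ne (X.N f) 0 with h0 | h0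
    · have hzero : (fun x => ∞ * f x) =ᵐ[μ] 0 :=
        ((X.eq_zero_iff f hf).mp h0).mono fun x hx => by simp [hx]
      rw [(X.eq_zero_iff _ (hf.const_mul _)).mpr hzero]
      exact zero_le
    · rw [ENNReal.top_mul h0]
      exact le_top
  · lift c to ℝ≥0 using hc
    exact (X.smul_eq c f hf).le

lemma N_indicator_one_eq (X : RINorm μ) {A B : Set α} (hA : MeasurableSet A)
    (hB : MeasurableSet B) (h : μ A = μ B) :
    X.N (A.indicator fun _ => 1) = X.N (B.indicator fun _ => 1) := by
  have hlevel : ∀ (S : Set α) (l : ℝ≥0∞),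
      {x | l < S.indicator (fun _ => 1) x} = if l < 1 then S else ∅ := by
    intro S l
    ext x
    by_cases hx : x ∈ S <;> by_cases hl : l < 1 <;> simp [hx, hl]
  refine X.rearr_invariant _ _ (measurable_const.indicator hA)
    (measurable_const.indicator hB) fun l => ?_
  rw [hlevel, hlevel]
  split_ifs
  · exact h
  · rfl

lemma mul_N_indicator_setOf_lt_le (X : RINorm μ) {f : α → ℝ≥0∞} (hf : Measurable f)
    (c : ℝ≥0) : c * X.N ({x | (c : ℝ≥0∞) < f x}.indicator fun _ => 1) ≤ X.N f := by
  have hA : MeasurableSet {x | (c : ℝ≥0∞) < f x} := measurableSet_lt measurable_const hf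
  rw [← X.smul_eq c _ (measurable_const.indicator hA)]
  refine X.mono _ _ ((measurable_const.indicator hA).const_mul _) hf (ae_of_all _ fun x => ?_)
  by_cases hx : (c : ℝ≥0∞) < f x
  · simpa [indicator_of_mem (show x ∈ {x | (c : ℝ≥0∞) < f x} from hx)] using hx.le
  · simp [indicator_of_notMem (show x ∉ {x | (c : ℝ≥0∞) < f x} from hx)]

end RINorm

lemma fund_le_N_indicator (X : RINorm μI) {A : Set ℝ} (hA : MeasurableSet A) {a : ℝ}
    (h : ENNReal.ofReal a < μI A) : fund X a ≤ X.N (A.indicator fun _ => 1) := by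
  obtain ⟨B, hB, haB, hBA⟩ : ∃ B, MeasurableSet B ∧ Ioo 0 a ⊆ B ∧ μI B = μI A := by
    rcases eq_or_ne (μI A) ∞ with hinf | hfin
    · exact ⟨Ioi 0, measurableSet_Ioi, Ioo_subset_Ioi_self, by rw [hinf, μI_Ioi_zero]⟩
    · refine ⟨Ioo 0 (μI A).toReal, measurableSet_Ioo, Ioo_subset_Ioo_right ?_, ?_⟩
      · exact (ENNReal.ofReal_le_iff_le_toReal hfin).mp h.le
      · rw [μI_Ioo, ENNReal.ofReal_toReal hfin]
  rw [X.N_indicator_one_eq hA hB hBA.symm]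
  exact X.mono _ _ (measurable_const.indicator measurableSet_Ioo)
    (measurable_const.indicator hB)
    (ae_of_all _ (indicator_le_indicator_of_subset haB fun _ => zero_le))

lemma rearr_mul_fund_le (X : RINorm μI) {f : ℝ → ℝ≥0∞} (hf : Measurable f) (a : ℝ) :
    rearr μI f a * fund X a ≤ X.N f := by
  refine ENNReal.mul_le_of_forall_lt fun c hc d hd => ?_
  lift c to ℝ≥0 using ne_top_of_lt hc
  calc (c : ℝ≥0∞) * d ≤ c * X.N ({x | (c : ℝ≥0∞) < f x}.indicator fun _ => 1) := by
        gcongr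
        exact hd.le.trans (fund_le_N_indicator X (measurableSet_lt measurable_const hf)
          (lt_measure_setOf_lt_of_lt_rearr hc))
    _ ≤ X.N f := X.mul_N_indicator_setOf_lt_le hf c

lemma ae_rearr_indicator_Ioi_rearr_mul_le (f w : ℝ → ℝ≥0∞) (a : ℝ) :
    ∀ᵐ t ∂μI, rearr μI ((Ioi a).indicator (rearr μI f)) t * w t ≤
      rearr μI f a * (Ioo 0 a).indicator w t +
        (Ioi a).indicator (fun t => rearr μI f t * w t) t := by
  set g := (Ioi a).indicator (rearr μI f)
  have hg_le_at : ∀ t, rearr μI g t ≤ rearr μI f a := rearr_le_of_forall_le fun s => by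
    by_cases hs : s ∈ Ioi a
    · simpa [g, indicator_of_mem hs] using rearr_antitone f (le_of_lt hs)
    · simp [g, indicator_of_notMem hs]
  have hg_le : ∀ t, rearr μI g t ≤ rearr μI f t := fun t =>
    (rearr_mono (indicator_le_self _ _) t).trans (rearr_rearr_le f t)
  filter_upwards [ae_restrict_mem measurableSet_Ioi,
    (Measure.ae_ne (volume.restrict (Ioi 0)) a : ∀ᵐ t ∂μI, t ≠ a)] with t ht0 hta
  rcases hta.lt_or_gt with hlt | hgt
  · rw [indicator_of_mem (show t ∈ Ioo 0 a from ⟨ht0, hlt⟩)]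
    exact (mul_le_mul_left (hg_le_at t) _).trans le_self_add
  · rw [indicator_of_mem (show t ∈ Ioi a from hgt)]
    exact (mul_le_mul_left (hg_le t) _).trans le_add_self

theorem cutting_weighted_norm_general (X Z : RINorm μI) (w : ℝ → ℝ≥0∞) (hw : Measurable w)
    (a : ℝ) :
    (⨆ (f : ℝ → ℝ≥0∞) (_ : Measurable f) (_ : X.N f ≤ 1),
        Z.N (fun t => rearr μI ((Set.Ioi a).indicator fun s => rearr μI f s) t * w t))
      ≤ Z.N ((Set.Ioo (0 : ℝ) a).indicator w) / fund X a +
        ⨆ (f : ℝ → ℝ≥0∞) (_ : Measurable f) (_ : X.N f ≤ 1),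
          Z.N ((Set.Ioi a).indicator fun t => rearr μI f t * w t) := by
  refine iSup₂_le fun f hf => iSup_le fun hN => ?_
  have hβ : rearr μI f a ≤ (fund X a)⁻¹ :=
    ENNReal.le_inv_iff_mul_le.mpr ((rearr_mul_fund_le X hf a).trans hN)
  have hw₀ : Measurable ((Ioo 0 a).indicator w) := hw.indicator measurableSet_Ioo
  have hw₁ : Measurable ((Ioi a).indicator fun t => rearr μI f t * w t) :=
    ((measurable_rearr f).mul hw).indicator measurableSet_Ioi
  calc Z.N (fun t => rearr μI ((Ioi a).indicator (rearr μI f)) t * w t)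
      ≤ Z.N (fun t => rearr μI f a * (Ioo 0 a).indicator w t +
          (Ioi a).indicator (fun t => rearr μI f t * w t) t) :=
        Z.mono _ _ ((measurable_rearr _).mul hw) ((hw₀.const_mul _).add hw₁)
          (ae_rearr_indicator_Ioi_rearr_mul_le f w a)
    _ ≤ rearr μI f a * Z.N ((Ioo 0 a).indicator w) +
          Z.N ((Ioi a).indicator fun t => rearr μI f t * w t) :=
        (Z.add_le _ _ (hw₀.const_mul _) hw₁).trans (add_le_add (Z.N_const_mul_le _ hw₀) le_rfl)
    _ ≤ Z.N ((Ioo 0 a).indicator w) / fund X a +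
          ⨆ (f : ℝ → ℝ≥0∞) (_ : Measurable f) (_ : X.N f ≤ 1),
            Z.N ((Ioi a).indicator fun t => rearr μI f t * w t) := by
      rw [ENNReal.div_eq_inv_mul]
      gcongr
      exact le_iSup₂_of_le f hf (le_iSup_of_le hN le_rfl)

/-- cutting off a weighted norm `‖g‖_Y := ‖g^* w‖_Z`. -/
theorem cutting_weighted_norm (X Z : RINorm μI) (w : ℝ → ℝ≥0∞) (hw : Measurable w)
    (a : ℝ) (ha : 0 < a) :
    (⨆ (f : ℝ → ℝ≥0∞) (_ : Measurable f) (_ : X.N f ≤ 1),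
        Z.N (fun t => rearr μI ((Set.Ioi a).indicator fun s => rearr μI f s) t * w t))
      ≤ Z.N ((Set.Ioo (0 : ℝ) a).indicator w) / fund X a +
        ⨆ (f : ℝ → ℝ≥0∞) (_ : Measurable f) (_ : X.N f ≤ 1),
          Z.N ((Set.Ioi a).indicator fun t => rearr μI f t * w t) :=
  cutting_weighted_norm_general X Z w hw a

end
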